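/- For n ≥ 4, (s_{n-1} - 1)^2/2 - 1 > 2^(2^(n-1)), where s_k is the Sylvester sequence. -/

import Mathlib

/-!
Since `s (k+1) - 1 = s k * (s k - 1) ≥ (s k - 1) ^ 2`, any bound `s (k+1) - 1 ≥ 2 * 2 ^ 2 ^ k`
squares into the next one, `(2 * 2 ^ 2 ^ k) ^ 2 = 4 * 2 ^ 2 ^ (k+1)` leaving a spare factor `2`.
It starts at `s 3 - 1 = 42 ≥ 32`. Squaring once more gives `(s (n-1) - 1) ^ 2 ≥ 4 * 2 ^ 2 ^ (n-1)`,
and the spare factor absorbs the halving and the `- 1`.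
-/

def sylvester : ℕ → ℕ
  | 0 => 2
  | n + 1 => sylvester n * (sylvester n - 1) + 1

lemma sylvester_succ_sub_one (k : ℕ) :
    sylvester (k + 1) - 1 = sylvester k * (sylvester k - 1) := by
  simp [sylvester]

lemma sylvester_sub_one_sq_le (k : ℕ) : (sylvester k - 1) ^ 2 ≤ sylvester (k + 1) - 1 := by
  rw [sylvester_succ_sub_one, sq]
  exact Nat.mul_le_mul_right _ (Nat.sub_le _ _)

lemma two_mul_two_pow_two_pow_sq (k : ℕ) : (2 * 2 ^ 2 ^ k) ^ 2 = 4 * 2 ^ 2 ^ (k + 1) := by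
  rw [pow_succ 2 k, pow_mul]
  ring

lemma two_mul_two_pow_two_pow_le_sylvester_sub_one {k : ℕ} (hk : 2 ≤ k) :
    2 * 2 ^ 2 ^ k ≤ sylvester (k + 1) - 1 := by
  induction k, hk using Nat.le_induction with
  | base => decide
  | succ k _ ih =>
    calc 2 * 2 ^ 2 ^ (k + 1) ≤ 4 * 2 ^ 2 ^ (k + 1) := by omega
      _ = (2 * 2 ^ 2 ^ k) ^ 2 := (two_mul_two_pow_two_pow_sq k).symm
      _ ≤ (sylvester (k + 1) - 1) ^ 2 := Nat.pow_le_pow_left ih 2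
      _ ≤ sylvester (k + 2) - 1 := sylvester_sub_one_sq_le (k + 1)

theorem terminal_index_gt_doubly_exponential (n : ℕ) (hn : 4 ≤ n) :
    (sylvester (n - 1) - 1) ^ 2 / 2 - 1 > 2 ^ (2 ^ (n - 1)) := by
  obtain ⟨k, rfl⟩ : ∃ k, n = k + 2 := ⟨n - 2, by omega⟩
  have hsq : 4 * 2 ^ 2 ^ (k + 1) ≤ (sylvester (k + 1) - 1) ^ 2 := by
    rw [← two_mul_two_pow_two_pow_sq]
    exact Nat.pow_le_pow_left (two_mul_two_pow_two_pow_le_sylvester_sub_one (by omega)) 2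
  have hpos : 2 ≤ 2 ^ 2 ^ (k + 1) := Nat.one_lt_two_pow (by positivity)
  rw [show k + 2 - 1 = k + 1 by omega]
  omega
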